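/- The weak reduction relation →w of the λ!-calculus is confluent: if t →w* u1 and t →w* u2, then there exists t' with u1 →w* t' and u2 →w* t'. -/
import Mathlib


/-! # The Bang Calculus Revisited: common definitions.

Terms are represented with de Bruijn indices, so that all the meta-level
substitutions are capture-avoiding by construction. -/

/-- Terms of the λ!-calculus.  `esub t u` is the explicit substitution
`t[0\u]`: the (anonymous) binder scopes over `t`, not over `u`. -/
inductive Tm : Type
  | var : ℕ → Tm
  | app : Tm → Tm → Tm
  | lam : Tm → Tm
  | bang : Tm → Tm
  | der : Tm → Tm
  | esub : Tm → Tm → Tm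
  deriving DecidableEq

namespace Tm

/-- lifting a renaming under a binder -/
def liftR (f : ℕ → ℕ) : ℕ → ℕ
  | 0 => 0
  | k + 1 => f k + 1

/-- renaming of free variables -/
def rename (f : ℕ → ℕ) : Tm → Tm
  | var k => var (f k)
  | app t u => app (rename f t) (rename f u)
  | lam t => lam (rename (liftR f) t)
  | bang t => bang (rename f t)
  | der t => der (rename f t)
  | esub t u => esub (rename (liftR f) t) (rename f u)

/-- lifting a simultaneous substitution under a binder -/
def liftS (σ : ℕ → Tm) : ℕ → Tm
  | 0 => var 0
  | k + 1 => rename (· + 1) (σ k)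

/-- simultaneous (capture-avoiding) substitution -/
def subst (σ : ℕ → Tm) : Tm → Tm
  | var k => σ k
  | app t u => app (subst σ t) (subst σ u)
  | lam t => lam (subst (liftS σ) t)
  | bang t => bang (subst σ t)
  | der t => der (subst σ t)
  | esub t u => esub (subst (liftS σ) t) (subst σ u)

/-- capture-avoiding substitution of `u` for the variable `0` of `t`,
where the result is placed under `n` extra binders (and `u` already lives
at that depth). -/
def substIn (n : ℕ) (u : Tm) (t : Tm) : Tm :=
  subst (fun k => match k with
    | 0 => u
    | k + 1 => var (k + n)) t

/-- capture-avoiding meta-level substitution `t{0 := u}` -/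
def subst0 (u : Tm) (t : Tm) : Tm := substIn 0 u t

/-- plugging a term into a list context `L ::= ◻ | L[x\t]`; the head of the
list is the argument of the outermost explicit substitution. -/
def plug : List Tm → Tm → Tm
  | [], s => s
  | e :: L, s => esub (plug L s) e

/-- the w-size of a term -/
def wsize : Tm → ℕ
  | var _ => 0
  | app t u => 1 + wsize t + wsize u
  | lam t => 1 + wsize t
  | bang _ => 0
  | der t => 1 + wsize t
  | esub t u => 1 + wsize t + wsize u

end Tm

/-- the names of the three rewriting rules of the λ!-calculus -/
inductive Rule : Type
  | dB | sb | db
  deriving DecidableEq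

open Tm in
/-- the three rewriting rules, applied at the root (at a distance) -/
inductive Root : Rule → Tm → Tm → Prop
  | dB (L : List Tm) (t u : Tm) :
      Root .dB (app (plug L (lam t)) u)
               (plug L (esub t (rename (· + L.length) u)))
  | sb (L : List Tm) (t u : Tm) :
      Root .sb (esub t (plug L (bang u))) (plug L (substIn L.length u t))
  | db (L : List Tm) (t : Tm) :
      Root .db (der (plug L (bang t))) (plug L t)

/-- closure of each rule under weak contexts (no reduction under `bang`) -/
inductive Step : Rule → Tm → Tm → Prop
  | root {r : Rule} {t t' : Tm} : Root r t t' → Step r t t'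
  | appL {r t t'} (u : Tm) : Step r t t' → Step r (Tm.app t u) (Tm.app t' u)
  | appR {r u u'} (t : Tm) : Step r u u' → Step r (Tm.app t u) (Tm.app t u')
  | lam {r t t'} : Step r t t' → Step r (Tm.lam t) (Tm.lam t')
  | der {r t t'} : Step r t t' → Step r (Tm.der t) (Tm.der t')
  | esubL {r t t'} (u : Tm) : Step r t t' → Step r (Tm.esub t u) (Tm.esub t' u)
  | esubR {r u u'} (t : Tm) : Step r u u' → Step r (Tm.esub t u) (Tm.esub t u')

/-- the weak reduction `→w` of the λ!-calculus -/
def StepW (t t' : Tm) : Prop := ∃ r, Step r t t'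

/-- counted weak reduction: `RedCnt t (b, e) u` holds iff `t →w* u` using `b`
dB-steps and `e` steps of kind s!/d!. -/
inductive RedCnt : Tm → ℕ × ℕ → Tm → Prop
  | refl (t : Tm) : RedCnt t (0, 0) t
  | db {t t₁ u : Tm} {b e : ℕ} :
      Step .dB t t₁ → RedCnt t₁ (b, e) u → RedCnt t (b + 1, e) u
  | ex {t t₁ u : Tm} {b e : ℕ} :
      (Step .sb t t₁ ∨ Step .db t t₁) → RedCnt t₁ (b, e) u →
      RedCnt t (b, e + 1) u

mutual
  /-- neutral w-normal terms -/
  inductive NeW : Tm → Prop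
    | var (k : ℕ) : NeW (Tm.var k)
    | app {t u : Tm} : NaW t → NoW u → NeW (Tm.app t u)
    | der {t : Tm} : NbW t → NeW (Tm.der t)
    | esub {t u : Tm} : NeW t → NbW u → NeW (Tm.esub t u)
  /-- neutral-abs w-normal terms -/
  inductive NaW : Tm → Prop
    | bang (t : Tm) : NaW (Tm.bang t)
    | ne {t : Tm} : NeW t → NaW t
    | esub {t u : Tm} : NaW t → NbW u → NaW (Tm.esub t u)
  /-- neutral-bang w-normal terms -/
  inductive NbW : Tm → Prop
    | ne {t : Tm} : NeW t → NbW t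
    | lam {t : Tm} : NoW t → NbW (Tm.lam t)
    | esub {t u : Tm} : NbW t → NbW u → NbW (Tm.esub t u)
  /-- w-normal terms -/
  inductive NoW : Tm → Prop
    | na {t : Tm} : NaW t → NoW t
    | nb {t : Tm} : NbW t → NoW t
end

/-- clashes -/
inductive Clash : Tm → Prop
  | appBang (L : List Tm) (t u : Tm) : Clash (Tm.app (Tm.plug L (Tm.bang t)) u)
  | esubLam (L : List Tm) (t u : Tm) : Clash (Tm.esub t (Tm.plug L (Tm.lam u)))
  | derLam (L : List Tm) (u : Tm) : Clash (Tm.der (Tm.plug L (Tm.lam u)))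
  | appLam (L : List Tm) (t u : Tm) : Clash (Tm.app t (Tm.plug L (Tm.lam u)))

/-- `WSub t s` holds iff `t = W⟨s⟩` for some weak context `W` -/
inductive WSub : Tm → Tm → Prop
  | refl (t : Tm) : WSub t t
  | appL {t s : Tm} (u : Tm) : WSub t s → WSub (Tm.app t u) s
  | appR {u s : Tm} (t : Tm) : WSub u s → WSub (Tm.app t u) s
  | lam {t s : Tm} : WSub t s → WSub (Tm.lam t) s
  | der {t s : Tm} : WSub t s → WSub (Tm.der t) s
  | esubL {t s : Tm} (u : Tm) : WSub t s → WSub (Tm.esub t u) s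
  | esubR {u s : Tm} (t : Tm) : WSub u s → WSub (Tm.esub t u) s

/-- weak clash freeness -/
def Wcf (t : Tm) : Prop := ¬ ∃ s, WSub t s ∧ Clash s

mutual
  /-- neutral weak clash free normal terms -/
  inductive NeCF : Tm → Prop
    | var (k : ℕ) : NeCF (Tm.var k)
    | app {t u : Tm} : NeCF t → NaCF u → NeCF (Tm.app t u)
    | der {t : Tm} : NeCF t → NeCF (Tm.der t)
    | esub {t u : Tm} : NeCF t → NeCF u → NeCF (Tm.esub t u)
  /-- neutral-abs weak clash free normal terms -/
  inductive NaCF : Tm → Prop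
    | bang (t : Tm) : NaCF (Tm.bang t)
    | ne {t : Tm} : NeCF t → NaCF t
    | esub {t u : Tm} : NaCF t → NeCF u → NaCF (Tm.esub t u)
  /-- neutral-bang weak clash free normal terms -/
  inductive NbCF : Tm → Prop
    | ne {t : Tm} : NeCF t → NbCF t
    | lam {t : Tm} : NoCF t → NbCF (Tm.lam t)
    | esub {t u : Tm} : NbCF t → NeCF u → NbCF (Tm.esub t u)
  /-- weak clash free normal terms -/
  inductive NoCF : Tm → Prop
    | na {t : Tm} : NaCF t → NoCF t
    | nb {t : Tm} : NbCF t → NoCF t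
end

/-- Types of system 𝒰: base types, multiset types and arrow types.  A
multiset type is given by a list of types (a representative of the multiset
it determines). -/
inductive Ty : Type
  | base : ℕ → Ty
  | mult : List Ty → Ty
  | arr : List Ty → Ty → Ty

/-- typing contexts: functions from (de Bruijn) variables to multiset types -/
abbrev Ctx := ℕ → Multiset Ty

/-- the context mapping `k` to `M` and anything else to the empty multiset -/
def Ctx.single (k : ℕ) (M : Multiset Ty) : Ctx := fun j => if j = k then M else 0

/-- removing the (type of the) bound variable `0` from a context -/
def Ctx.tail (Γ : Ctx) : Ctx := fun k => Γ (k + 1)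

/-- extending a context with a multiset type for a fresh variable `0` -/
def Ctx.cons (M : Multiset Ty) (Γ : Ctx) : Ctx := fun k =>
  match k with
  | 0 => M
  | k + 1 => Γ k

/-- Sized typing of system 𝒰: `DerU Γ t τ n` means that there is a derivation
of `Γ ⊢ t : τ` whose size (number of rules, not counting `bg`) is `n`. -/
inductive DerU : Ctx → Tm → Ty → ℕ → Prop
  | ax (k : ℕ) (σ : Ty) : DerU (Ctx.single k {σ}) (Tm.var k) σ 1
  | app {Γ Δ : Ctx} {t u : Tm} {M : List Ty} {τ : Ty} {n m : ℕ} :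
      DerU Γ t (Ty.arr M τ) n → DerU Δ u (Ty.mult M) m →
      DerU (Γ + Δ) (Tm.app t u) τ (n + m + 1)
  | abs {Γ : Ctx} {t : Tm} {τ : Ty} {n : ℕ} (M : List Ty) :
      DerU Γ t τ n → Multiset.ofList M = Γ 0 →
      DerU (Ctx.tail Γ) (Tm.lam t) (Ty.arr M τ) (n + 1)
  | es {Γ Δ : Ctx} {t u : Tm} {σ : Ty} {M : List Ty} {n m : ℕ} :
      DerU Γ t σ n → DerU Δ u (Ty.mult M) m → Multiset.ofList M = Γ 0 →
      DerU (Ctx.tail Γ + Δ) (Tm.esub t u) σ (n + m + 1)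
  | bg {t : Tm} (prs : List (Ctx × Ty × ℕ)) :
      (∀ p ∈ prs, DerU p.1 t p.2.1 p.2.2) →
      DerU ((prs.map (·.1)).sum) (Tm.bang t)
           (Ty.mult (prs.map (·.2.1))) ((prs.map (·.2.2)).sum)
  | dr {Γ : Ctx} {t : Tm} {σ : Ty} {n : ℕ} :
      DerU Γ t (Ty.mult [σ]) n → DerU Γ (Tm.der t) σ (n + 1)

/-! ## The source λ-calculus with explicit substitutions (CBN / CBV) -/

/-- terms of the λ-calculus with explicit substitutions (de Bruijn) -/
inductive Lm : Type
  | var : ℕ → Lm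
  | app : Lm → Lm → Lm
  | lam : Lm → Lm
  | esub : Lm → Lm → Lm
  deriving DecidableEq

namespace Lm

def liftR (f : ℕ → ℕ) : ℕ → ℕ
  | 0 => 0
  | k + 1 => f k + 1

def rename (f : ℕ → ℕ) : Lm → Lm
  | var k => var (f k)
  | app t u => app (rename f t) (rename f u)
  | lam t => lam (rename (liftR f) t)
  | esub t u => esub (rename (liftR f) t) (rename f u)

def liftS (σ : ℕ → Lm) : ℕ → Lm
  | 0 => var 0
  | k + 1 => rename (· + 1) (σ k)

def subst (σ : ℕ → Lm) : Lm → Lm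
  | var k => σ k
  | app t u => app (subst σ t) (subst σ u)
  | lam t => lam (subst (liftS σ) t)
  | esub t u => esub (subst (liftS σ) t) (subst σ u)

def substIn (n : ℕ) (u : Lm) (t : Lm) : Lm :=
  subst (fun k => match k with
    | 0 => u
    | k + 1 => var (k + n)) t

/-- capture-avoiding meta-level substitution `t{0 := u}` -/
def subst0 (u : Lm) (t : Lm) : Lm := substIn 0 u t

def plug : List Lm → Lm → Lm
  | [], s => s
  | e :: L, s => esub (plug L s) e

/-- values -/
def IsVal : Lm → Prop
  | var _ => True
  | lam _ => True
  | _ => False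

/-- the n-size of a term -/
def nsize : Lm → ℕ
  | var _ => 0
  | lam t => 1 + nsize t
  | app t _ => 1 + nsize t
  | esub t _ => 1 + nsize t

/-- the v-size of a term -/
def vsize : Lm → ℕ
  | var _ => 0
  | lam _ => 0
  | app t u => 1 + vsize t + vsize u
  | esub t u => 1 + vsize t + vsize u

end Lm

/-- names of the CBN rules -/
inductive NRule : Type
  | dB | s
  deriving DecidableEq

/-- call-by-name reduction (closure of dB and s under CBN contexts) -/
inductive StepN : NRule → Lm → Lm → Prop
  | dB (L : List Lm) (t u : Lm) :
      StepN .dB (Lm.app (Lm.plug L (Lm.lam t)) u)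
                (Lm.plug L (Lm.esub t (Lm.rename (· + L.length) u)))
  | s (t u : Lm) : StepN .s (Lm.esub t u) (Lm.subst0 u t)
  | appL {r t t'} (u : Lm) : StepN r t t' → StepN r (Lm.app t u) (Lm.app t' u)
  | lam {r t t'} : StepN r t t' → StepN r (Lm.lam t) (Lm.lam t')
  | esubL {r t t'} (u : Lm) : StepN r t t' → StepN r (Lm.esub t u) (Lm.esub t' u)

/-- names of the CBV rules -/
inductive VRule : Type
  | dB | sv
  deriving DecidableEq

/-- call-by-value reduction (closure of dB and sv under CBV contexts) -/
inductive StepV : VRule → Lm → Lm → Prop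
  | dB (L : List Lm) (t u : Lm) :
      StepV .dB (Lm.app (Lm.plug L (Lm.lam t)) u)
                (Lm.plug L (Lm.esub t (Lm.rename (· + L.length) u)))
  | sv (L : List Lm) (t v : Lm) (hv : Lm.IsVal v) :
      StepV .sv (Lm.esub t (Lm.plug L v)) (Lm.plug L (Lm.substIn L.length v t))
  | appL {r t t'} (u : Lm) : StepV r t t' → StepV r (Lm.app t u) (Lm.app t' u)
  | appR {r u u'} (t : Lm) : StepV r u u' → StepV r (Lm.app t u) (Lm.app t u')
  | esubL {r t t'} (u : Lm) : StepV r t t' → StepV r (Lm.esub t u) (Lm.esub t' u)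
  | esubR {r u u'} (t : Lm) : StepV r u u' → StepV r (Lm.esub t u) (Lm.esub t u')

mutual
  /-- CBN neutral terms -/
  inductive NeN : Lm → Prop
    | var (k : ℕ) : NeN (Lm.var k)
    | app {t : Lm} (u : Lm) : NeN t → NeN (Lm.app t u)
  /-- CBN normal terms -/
  inductive NoN : Lm → Prop
    | lam {t : Lm} : NoN t → NoN (Lm.lam t)
    | ne {t : Lm} : NeN t → NoN t
end

mutual
  /-- CBV (substituted) variables -/
  inductive VrV : Lm → Prop
    | var (k : ℕ) : VrV (Lm.var k)
    | esub {t u : Lm} : VrV t → NeV u → VrV (Lm.esub t u)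
  /-- CBV neutral terms -/
  inductive NeV : Lm → Prop
    | app₁ {t u : Lm} : VrV t → NoV u → NeV (Lm.app t u)
    | app₂ {t u : Lm} : NeV t → NoV u → NeV (Lm.app t u)
    | esub {t u : Lm} : NeV t → NeV u → NeV (Lm.esub t u)
  /-- CBV normal terms -/
  inductive NoV : Lm → Prop
    | lam (t : Lm) : NoV (Lm.lam t)
    | vr {t : Lm} : VrV t → NoV t
    | ne {t : Lm} : NeV t → NoV t
    | esub {t u : Lm} : NoV t → NeV u → NoV (Lm.esub t u)
end

/-- counted CBN reduction, recording the number of dB- and s-steps -/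
inductive RedCntN : Lm → ℕ × ℕ → Lm → Prop
  | refl (t : Lm) : RedCntN t (0, 0) t
  | db {t t₁ u : Lm} {b e : ℕ} :
      StepN .dB t t₁ → RedCntN t₁ (b, e) u → RedCntN t (b + 1, e) u
  | s {t t₁ u : Lm} {b e : ℕ} :
      StepN .s t t₁ → RedCntN t₁ (b, e) u → RedCntN t (b, e + 1) u

/-- counted CBV reduction, recording the number of dB- and sv-steps -/
inductive RedCntV : Lm → ℕ × ℕ → Lm → Prop
  | refl (t : Lm) : RedCntV t (0, 0) t
  | db {t t₁ u : Lm} {b e : ℕ} :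
      StepV .dB t t₁ → RedCntV t₁ (b, e) u → RedCntV t (b + 1, e) u
  | sv {t t₁ u : Lm} {b e : ℕ} :
      StepV .sv t t₁ → RedCntV t₁ (b, e) u → RedCntV t (b, e + 1) u

/-- the CBN embedding into the λ!-calculus -/
def cbn : Lm → Tm
  | .var k => .var k
  | .lam t => .lam (cbn t)
  | .app t u => .app (cbn t) (.bang (cbn u))
  | .esub t u => .esub (cbn t) (.bang (cbn u))

/-- `deBang t = some s'` iff `t = L⟨!s⟩` and `s' = L⟨s⟩` -/
def deBang : Tm → Option Tm
  | .bang s => some s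
  | .esub t e => (deBang t).map (fun s => Tm.esub s e)
  | _ => none

/-- the CBV embedding into the λ!-calculus -/
def cbv : Lm → Tm
  | .var k => .bang (.var k)
  | .lam t => .bang (.lam (cbv t))
  | .app t u =>
      match deBang (cbv t) with
      | some r => Tm.app r (cbv u)
      | none => Tm.app (.der (cbv t)) (cbv u)
  | .esub t u => .esub (cbv t) (cbv u)

/-- Sized typing of system 𝒩 (call-by-name): `DerN Γ t τ n` means that there
is a derivation of `Γ ⊢ t : τ` of size `n` (counting all rules). -/
inductive DerN : Ctx → Lm → Ty → ℕ → Prop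
  | ax (k : ℕ) (σ : Ty) : DerN (Ctx.single k {σ}) (Lm.var k) σ 1
  | app {Γ : Ctx} {t u : Lm} {τ : Ty} {n : ℕ} (prs : List (Ctx × Ty × ℕ)) :
      DerN Γ t (Ty.arr (prs.map (·.2.1)) τ) n →
      (∀ p ∈ prs, DerN p.1 u p.2.1 p.2.2) →
      DerN (Γ + (prs.map (·.1)).sum) (Lm.app t u) τ
           (n + (prs.map (·.2.2)).sum + 1)
  | abs {Γ : Ctx} {t : Lm} {τ : Ty} {n : ℕ} (M : List Ty) :
      DerN Γ t τ n → Multiset.ofList M = Γ 0 →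
      DerN (Ctx.tail Γ) (Lm.lam t) (Ty.arr M τ) (n + 1)
  | es {Γ : Ctx} {t u : Lm} {τ : Ty} {n : ℕ} (prs : List (Ctx × Ty × ℕ)) :
      DerN Γ t τ n →
      Multiset.ofList (prs.map (·.2.1)) = Γ 0 →
      (∀ p ∈ prs, DerN p.1 u p.2.1 p.2.2) →
      DerN (Ctx.tail Γ + (prs.map (·.1)).sum) (Lm.esub t u) τ
           (n + (prs.map (·.2.2)).sum + 1)

/-- Sized typing of system 𝒱 (call-by-value): `DerV Γ t τ n` means that there
is a derivation of `Γ ⊢ t : τ` of size `n` (each rule counts 1, except that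
`ax` counts the cardinal of its multiset and `abs` contributes the sizes of
its premises plus the number of premises). -/
inductive DerV : Ctx → Lm → Ty → ℕ → Prop
  | ax (k : ℕ) (M : List Ty) :
      DerV (Ctx.single k (Multiset.ofList M)) (Lm.var k) (Ty.mult M) M.length
  | es {Γ Δ : Ctx} {t u : Lm} {σ : Ty} {M : List Ty} {n m : ℕ} :
      DerV Γ t σ n → DerV Δ u (Ty.mult M) m → Multiset.ofList M = Γ 0 →
      DerV (Ctx.tail Γ + Δ) (Lm.esub t u) σ (n + m + 1)
  | abs {t : Lm} (prs : List (Ctx × List Ty × Ty × ℕ)) :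
      (∀ p ∈ prs, DerV p.1 t p.2.2.1 p.2.2.2) →
      (∀ p ∈ prs, Multiset.ofList p.2.1 = p.1 0) →
      DerV ((prs.map (fun p => Ctx.tail p.1)).sum) (Lm.lam t)
           (Ty.mult (prs.map (fun p => Ty.arr p.2.1 p.2.2.1)))
           ((prs.map (·.2.2.2)).sum + prs.length)
  | app {Γ Δ : Ctx} {t u : Lm} {M : List Ty} {τ : Ty} {n m : ℕ} :
      DerV Γ t (Ty.mult [Ty.arr M τ]) n → DerV Δ u (Ty.mult M) m →
      DerV (Γ + Δ) (Lm.app t u) τ (n + m + 1)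

section Confl
open Tm

private theorem liftR_comp (f g : ℕ → ℕ) : (fun k => liftR f (liftR g k)) = liftR (fun k => f (g k)) := by
  funext k; cases k <;> simp [liftR]

private theorem rename_rename (f g : ℕ → ℕ) (t : Tm) :
    rename f (rename g t) = rename (fun k => f (g k)) t := by
  induction t generalizing f g <;> simp [rename, liftR_comp, *]

private theorem rename_congr {f g : ℕ → ℕ} (h : ∀ k, f k = g k) (t : Tm) :
    rename f t = rename g t := by
  have : f = g := funext h
  rw [this]

private theorem subst_congr {σ τ : ℕ → Tm} (h : ∀ k, σ k = τ k) (t : Tm) :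
    subst σ t = subst τ t := by
  have : σ = τ := funext h
  rw [this]

private theorem liftS_liftR (σ : ℕ → Tm) (f : ℕ → ℕ) :
    (fun k => liftS σ (liftR f k)) = liftS (fun k => σ (f k)) := by
  funext k; cases k <;> simp [liftS, liftR]

private theorem subst_rename (σ : ℕ → Tm) (f : ℕ → ℕ) (t : Tm) :
    subst σ (rename f t) = subst (fun k => σ (f k)) t := by
  induction t generalizing σ f <;> simp [rename, subst, liftS_liftR, *]

private theorem rename_liftS (f : ℕ → ℕ) (σ : ℕ → Tm) :
    (fun k => rename (liftR f) (liftS σ k)) = liftS (fun k => rename f (σ k)) := by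
  funext k
  cases k with
  | zero => simp [liftS, rename, liftR]
  | succ k =>
    simp only [liftS, rename_rename]
    exact rename_congr (fun j => rfl) _

private theorem rename_subst (f : ℕ → ℕ) (σ : ℕ → Tm) (t : Tm) :
    rename f (subst σ t) = subst (fun k => rename f (σ k)) t := by
  induction t generalizing σ f <;> simp [rename, subst, rename_liftS, *]

private theorem subst_liftS (σ τ : ℕ → Tm) :
    (fun k => subst (liftS σ) (liftS τ k)) = liftS (fun k => subst σ (τ k)) := by
  funext k
  cases k with
  | zero => simp [liftS, subst]
  | succ k =>
    simp only [liftS, subst_rename, rename_subst]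

private theorem subst_subst (σ τ : ℕ → Tm) (t : Tm) :
    subst σ (subst τ t) = subst (fun k => subst σ (τ k)) t := by
  induction t generalizing σ τ <;> simp [subst, subst_liftS, *]

private theorem liftS_var (f : ℕ → ℕ) :
    (fun k => liftS (fun j => var (f j)) k) = fun k => var (liftR f k) := by
  funext k; cases k <;> simp [liftS, liftR, rename]

private theorem subst_var_fn (f : ℕ → ℕ) (t : Tm) :
    subst (fun k => var (f k)) t = rename f t := by
  induction t generalizing f <;> simp [subst, rename, liftS_var, *]

private theorem rename_id (t : Tm) : rename (fun k => k) t = t := by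
  have h : liftR (fun k => k) = fun k => k := by funext k; cases k <;> simp [liftR]
  induction t <;> simp [rename, h, *]

private theorem plug_append (L₁ L₂ : List Tm) (s : Tm) :
    plug (L₁ ++ L₂) s = plug L₁ (plug L₂ s) := by
  induction L₁ <;> simp [plug, *]

private def substL (σ : ℕ → Tm) : List Tm → List Tm
  | [] => []
  | e :: L => subst σ e :: substL (liftS σ) L

private def liftSn : ℕ → (ℕ → Tm) → (ℕ → Tm)
  | 0, σ => σ
  | n+1, σ => liftSn n (liftS σ)

private theorem substL_length (σ : ℕ → Tm) (L : List Tm) :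
    (substL σ L).length = L.length := by
  induction L generalizing σ <;> simp [substL, *]

private theorem subst_plug (σ : ℕ → Tm) (L : List Tm) (s : Tm) :
    subst σ (plug L s) = plug (substL σ L) (subst (liftSn L.length σ) s) := by
  induction L generalizing σ with
  | nil => rfl
  | cons e L ih => simp [plug, subst, substL, liftSn, ih]

private theorem liftSn_add (n : ℕ) (σ : ℕ → Tm) (k : ℕ) :
    liftSn n σ (k + n) = rename (fun j => j + n) (σ k) := by
  induction n generalizing σ k with
  | zero =>
    show σ k = _
    rw [show (fun j : ℕ => j + 0) = (fun j : ℕ => j) from funext fun j => rfl, rename_id]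
  | succ n ih =>
    show liftSn n (liftS σ) (k + (n+1)) = _
    have e1 : k + (n + 1) = (k + 1) + n := by omega
    rw [e1, ih (liftS σ) (k+1)]
    show rename _ (rename (fun j => j + 1) (σ k)) = _
    rw [rename_rename]
    exact rename_congr (fun j => by omega) _

private def headOk : Tm → Prop
  | .esub _ _ => False
  | _ => True

private theorem plug_inj : ∀ {L₁ L₂ : List Tm} {s₁ s₂ : Tm}, headOk s₁ → headOk s₂ →
    plug L₁ s₁ = plug L₂ s₂ → L₁ = L₂ ∧ s₁ = s₂ := by
  intro L₁
  induction L₁ with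
  | nil =>
    intro L₂ s₁ s₂ h1 h2 he
    cases L₂ with
    | nil => exact ⟨rfl, he⟩
    | cons e L₂ =>
      exfalso
      rw [show plug [] s₁ = s₁ from rfl] at he
      rw [he] at h1
      exact h1
  | cons e L₁ ih =>
    intro L₂ s₁ s₂ h1 h2 he
    cases L₂ with
    | nil =>
      exfalso
      rw [show plug [] s₂ = s₂ from rfl] at he
      rw [← he] at h2
      exact h2
    | cons e' L₂ =>
      simp only [plug, Tm.esub.injEq] at he
      obtain ⟨hp, hee⟩ := he
      obtain ⟨hL, hs⟩ := ih h1 h2 hp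
      exact ⟨by rw [hL, hee], hs⟩
private theorem Root_subst {r : Rule} {t u : Tm} (h : Root r t u) (σ : ℕ → Tm) :
    Root r (subst σ t) (subst σ u) := by
  cases h with
  | dB L t u =>
    have key : subst (liftSn L.length σ) (rename (fun j => j + L.length) u)
        = rename (fun j => j + L.length) (subst σ u) := by
      rw [subst_rename, rename_subst]
      exact subst_congr (fun k => liftSn_add L.length σ k) u
    have h1 : subst σ (app (plug L (lam t)) u)
        = app (plug (substL σ L) (lam (subst (liftS (liftSn L.length σ)) t))) (subst σ u) := by
      simp [subst, subst_plug]
    have h2 : subst σ (plug L (esub t (rename (fun j => j + L.length) u)))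
        = plug (substL σ L) (esub (subst (liftS (liftSn L.length σ)) t)
            (rename (fun j => j + (substL σ L).length) (subst σ u))) := by
      simp [subst_plug, subst, key, substL_length]
    rw [h1, h2]
    exact Root.dB (substL σ L) (subst (liftS (liftSn L.length σ)) t) (subst σ u)
  | sb L t u =>
    have key : subst (liftSn L.length σ) (substIn L.length u t)
        = substIn L.length (subst (liftSn L.length σ) u) (subst (liftS σ) t) := by
      simp only [substIn, subst_subst]
      apply subst_congr
      intro k
      cases k with
      | zero => rfl
      | succ k =>
        show liftSn L.length σ (k + L.length)
            = subst _ (liftS σ (k+1))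
        rw [liftSn_add]
        show _ = subst _ (rename (fun j => j + 1) (σ k))
        rw [subst_rename]
        exact (subst_var_fn _ _).symm
    have h1 : subst σ (esub t (plug L (bang u)))
        = esub (subst (liftS σ) t)
            (plug (substL σ L) (bang (subst (liftSn L.length σ) u))) := by
      simp [subst, subst_plug]
    have h2 : subst σ (plug L (substIn L.length u t))
        = plug (substL σ L)
            (substIn (substL σ L).length (subst (liftSn L.length σ) u) (subst (liftS σ) t)) := by
      rw [subst_plug, key, substL_length]
    rw [h1, h2]
    exact Root.sb (substL σ L) (subst (liftS σ) t) (subst (liftSn L.length σ) u)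
  | db L t =>
    have h1 : subst σ (der (plug L (bang t)))
        = der (plug (substL σ L) (bang (subst (liftSn L.length σ) t))) := by
      simp [subst, subst_plug]
    rw [h1, subst_plug]
    exact Root.db (substL σ L) (subst (liftSn L.length σ) t)

private theorem Step_subst {r : Rule} {t u : Tm} (h : Step r t u) (σ : ℕ → Tm) :
    Step r (subst σ t) (subst σ u) := by
  induction h generalizing σ with
  | root h => exact Step.root (Root_subst h σ)
  | appL u _ ih => exact Step.appL _ (ih σ)
  | appR t _ ih => exact Step.appR _ (ih σ)
  | lam _ ih => exact Step.lam (ih (liftS σ))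
  | der _ ih => exact Step.der (ih σ)
  | esubL u _ ih => exact Step.esubL _ (ih (liftS σ))
  | esubR t _ ih => exact Step.esubR _ (ih σ)

private theorem Step_rename {r : Rule} {t u : Tm} (h : Step r t u) (f : ℕ → ℕ) :
    Step r (rename f t) (rename f u) := by
  rw [← subst_var_fn, ← subst_var_fn]
  exact Step_subst h _

private theorem Step_plug {r : Rule} (L : List Tm) {s s' : Tm} (h : Step r s s') :
    Step r (plug L s) (plug L s') := by
  induction L with
  | nil => exact h
  | cons e L ih => exact Step.esubL e ih
private def sigma0 (v : Tm) (n : ℕ) : ℕ → Tm := fun k =>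
  match k with
  | 0 => v
  | k + 1 => var (k + n)

private theorem substIn_eq (n : ℕ) (u t : Tm) : substIn n u t = subst (sigma0 u n) t := rfl

private theorem stepA {r : Rule} {L : List Tm} {t s : Tm}
    (h : Step r (plug L (lam t)) s) :
    ∃ L' t', s = plug L' (lam t') ∧
      ∀ m u, Step r (plug L (esub t (rename (fun j => j + (L.length + m)) u)))
                    (plug L' (esub t' (rename (fun j => j + (L'.length + m)) u))) := by
  induction L generalizing s with
  | nil =>
    have h : Step r (lam t) s := h
    cases h with
    | root h => cases h
    | lam h' => exact ⟨[], _, rfl, fun m u => Step.esubL _ h'⟩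
  | cons e L ih =>
    have h : Step r (esub (plug L (lam t)) e) s := h
    cases h with
    | root h =>
      cases h with
      | sb M t0 v =>
        refine ⟨M ++ substL (sigma0 v M.length) L,
          subst (liftS (liftSn L.length (sigma0 v M.length))) t, ?_, ?_⟩
        · rw [substIn_eq, subst_plug, plug_append]
          simp [subst]
        · intro m u
          have base := Step.root
            (Root.sb M (plug L (esub t (rename (fun j => j + (L.length + 1 + m)) u))) v)
          have hZ : subst (liftSn L.length (sigma0 v M.length))
                (rename (fun j => j + (L.length + 1 + m)) u)
              = rename (fun j => j + ((M ++ substL (sigma0 v M.length) L).length + m)) u := by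
            rw [subst_rename, ← subst_var_fn]
            apply subst_congr
            intro j
            have e1 : j + (L.length + 1 + m) = (j + (m + 1)) + L.length := by omega
            rw [e1, liftSn_add]
            show rename (fun i => i + L.length) (var ((j + m) + M.length)) = _
            simp only [rename, List.length_append, substL_length]
            congr 1
            omega
          have hres : plug M (substIn M.length v
                (plug L (esub t (rename (fun j => j + (L.length + 1 + m)) u))))
              = plug (M ++ substL (sigma0 v M.length) L)
                  (esub (subst (liftS (liftSn L.length (sigma0 v M.length))) t)
                    (rename (fun j => j + ((M ++ substL (sigma0 v M.length) L).length + m)) u)) := by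
            rw [substIn_eq, subst_plug, plug_append]
            simp only [subst]
            rw [hZ]
          exact hres ▸ base
    | esubL u' h' =>
      obtain ⟨L', t', rfl, hstep⟩ := ih h'
      refine ⟨e :: L', t', rfl, ?_⟩
      intro m u
      have hs := hstep (m + 1) u
      have e1 : L.length + (m + 1) = L.length + 1 + m := by omega
      have e2 : L'.length + (m + 1) = L'.length + 1 + m := by omega
      rw [e1, e2] at hs
      exact Step.esubL e hs
    | esubR t0 h' =>
      exact ⟨_ :: L, t, rfl, fun m u => Step.esubR _ h'⟩

private theorem stepB {r : Rule} {L : List Tm} {u s : Tm}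
    (h : Step r (plug L (bang u)) s) :
    ∃ L' u', s = plug L' (bang u') ∧
      ∀ m t, Step r (plug L (substIn (L.length + m) u t))
                    (plug L' (substIn (L'.length + m) u' t)) := by
  induction L generalizing s with
  | nil =>
    have h : Step r (bang u) s := h
    cases h with
    | root h => cases h
  | cons e L ih =>
    have h : Step r (esub (plug L (bang u)) e) s := h
    cases h with
    | root h =>
      cases h with
      | sb M t0 v =>
        refine ⟨M ++ substL (sigma0 v M.length) L,
          subst (liftSn L.length (sigma0 v M.length)) u, ?_, ?_⟩
        · rw [substIn_eq, subst_plug, plug_append]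
          simp [subst]
        · intro m t
          have base := Step.root
            (Root.sb M (plug L (substIn (L.length + 1 + m) u t)) v)
          have key : subst (liftSn L.length (sigma0 v M.length)) (substIn (L.length + 1 + m) u t)
              = substIn ((M ++ substL (sigma0 v M.length) L).length + m)
                  (subst (liftSn L.length (sigma0 v M.length)) u) t := by
            simp only [substIn_eq, subst_subst]
            apply subst_congr
            intro k
            cases k with
            | zero => rfl
            | succ k =>
              show liftSn L.length (sigma0 v M.length) (k + (L.length + 1 + m)) = _
              have e1 : k + (L.length + 1 + m) = (k + (m + 1)) + L.length := by omega
              rw [e1, liftSn_add]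
              show rename (fun i => i + L.length) (var ((k + m) + M.length)) = _
              simp only [rename, List.length_append, substL_length]
              show var _ = sigma0 _ _ (k + 1)
              simp only [sigma0]
              congr 1
              omega
          have hres : plug M (substIn M.length v
                (plug L (substIn (L.length + 1 + m) u t)))
              = plug (M ++ substL (sigma0 v M.length) L)
                  (substIn ((M ++ substL (sigma0 v M.length) L).length + m)
                    (subst (liftSn L.length (sigma0 v M.length)) u) t) := by
            rw [substIn_eq M.length, subst_plug, plug_append, key]
          exact hres ▸ base
    | esubL u' h' =>
      obtain ⟨L', u'', rfl, hstep⟩ := ih h'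
      refine ⟨e :: L', u'', rfl, ?_⟩
      intro m t
      have hs := hstep (m + 1) t
      have e1 : L.length + (m + 1) = L.length + 1 + m := by omega
      have e2 : L'.length + (m + 1) = L'.length + 1 + m := by omega
      rw [e1, e2] at hs
      exact Step.esubL e hs
    | esubR t0 h' =>
      exact ⟨_ :: L, u, rfl, fun m t => Step.esubR _ h'⟩
private theorem stepW_appL {a b : Tm} (u : Tm) (h : StepW a b) : StepW (app a u) (app b u) :=
  ⟨h.choose, Step.appL u h.choose_spec⟩
private theorem stepW_appR {a b : Tm} (t : Tm) (h : StepW a b) : StepW (app t a) (app t b) :=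
  ⟨h.choose, Step.appR t h.choose_spec⟩
private theorem stepW_lam {a b : Tm} (h : StepW a b) : StepW (lam a) (lam b) :=
  ⟨h.choose, Step.lam h.choose_spec⟩
private theorem stepW_der {a b : Tm} (h : StepW a b) : StepW (der a) (der b) :=
  ⟨h.choose, Step.der h.choose_spec⟩
private theorem stepW_esubL {a b : Tm} (u : Tm) (h : StepW a b) : StepW (esub a u) (esub b u) :=
  ⟨h.choose, Step.esubL u h.choose_spec⟩
private theorem stepW_esubR {a b : Tm} (t : Tm) (h : StepW a b) : StepW (esub t a) (esub t b) :=
  ⟨h.choose, Step.esubR t h.choose_spec⟩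

private theorem ReflGen_lift {f : Tm → Tm} (hf : ∀ {a b : Tm}, StepW a b → StepW (f a) (f b))
    {a b : Tm} (h : Relation.ReflGen StepW a b) : Relation.ReflGen StepW (f a) (f b) := by
  cases h with
  | refl => exact .refl
  | single h => exact .single (hf h)

private theorem root_app_inv {r : Rule} {A B s : Tm} (h : Root r (app A B) s) :
    ∃ L t, A = plug L (lam t) ∧
      s = plug L (esub t (rename (fun j => j + L.length) B)) := by
  cases h with
  | dB L t u => exact ⟨L, t, rfl, rfl⟩

private theorem root_esub_inv {r : Rule} {A B s : Tm} (h : Root r (esub A B) s) :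
    ∃ L u, B = plug L (bang u) ∧ s = plug L (substIn L.length u A) := by
  cases h with
  | sb L t u => exact ⟨L, u, rfl, rfl⟩

private theorem root_der_inv {r : Rule} {A s : Tm} (h : Root r (der A) s) :
    ∃ L u, A = plug L (bang u) ∧ s = plug L u := by
  cases h with
  | db L t => exact ⟨L, t, rfl, rfl⟩

private theorem rootDiamond {r₁ r₂ : Rule} {t u₁ u₂ : Tm}
    (h₁ : Root r₁ t u₁) (h₂ : Step r₂ t u₂) :
    ∃ v, Relation.ReflGen StepW u₁ v ∧ Relation.ReflGen StepW u₂ v := by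
  cases h₁ with
  | dB L t u =>
    cases h₂ with
    | root h =>
      obtain ⟨L₂, t₂, hA, rfl⟩ := root_app_inv h
      obtain ⟨hL, ht⟩ := plug_inj (by trivial) (by trivial) hA
      cases hL
      injection ht with ht
      cases ht
      exact ⟨_, .refl, .refl⟩
    | appL u' h =>
      obtain ⟨L', tt', rfl, hstep⟩ := stepA h
      refine ⟨plug L' (esub tt' (rename (fun j => j + L'.length) u)), ?_, ?_⟩
      · exact .single ⟨r₂, hstep 0 u⟩
      · exact .single ⟨.dB, Step.root (Root.dB L' tt' u)⟩
    | @appR _ u' _ h =>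
      refine ⟨plug L (esub t (rename (fun j => j + L.length) u')), ?_, ?_⟩
      · exact .single ⟨r₂, Step_plug L (Step.esubR _ (Step_rename h _))⟩
      · exact .single ⟨.dB, Step.root (Root.dB L t u')⟩
  | sb L t u =>
    cases h₂ with
    | root h =>
      obtain ⟨L₂, u₂', hB, rfl⟩ := root_esub_inv h
      obtain ⟨hL, hu⟩ := plug_inj (by trivial) (by trivial) hB
      cases hL
      injection hu with hu
      cases hu
      exact ⟨_, .refl, .refl⟩
    | @esubL _ t₁ _ h =>
      refine ⟨plug L (substIn L.length u t₁), ?_, ?_⟩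
      · refine .single ⟨r₂, Step_plug L ?_⟩
        rw [substIn_eq, substIn_eq]
        exact Step_subst h _
      · exact .single ⟨.sb, Step.root (Root.sb L t₁ u)⟩
    | esubR t' h =>
      obtain ⟨L', u', rfl, hstep⟩ := stepB h
      refine ⟨plug L' (substIn L'.length u' t), ?_, ?_⟩
      · exact .single ⟨r₂, hstep 0 t⟩
      · exact .single ⟨.sb, Step.root (Root.sb L' t u')⟩
  | db L t =>
    cases h₂ with
    | root h =>
      obtain ⟨L₂, t₂', hB, rfl⟩ := root_der_inv h
      obtain ⟨hL, ht⟩ := plug_inj (by trivial) (by trivial) hB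
      cases hL
      injection ht with ht
      cases ht
      exact ⟨_, .refl, .refl⟩
    | der h =>
      obtain ⟨L', t', rfl, hstep⟩ := stepB h
      refine ⟨plug L' t', ?_, ?_⟩
      · exact .single ⟨r₂, hstep 0 (var 0)⟩
      · exact .single ⟨.db, Step.root (Root.db L' t')⟩
private theorem diamond {r₁ r₂ : Rule} {t u₁ u₂ : Tm}
    (h₁ : Step r₁ t u₁) (h₂ : Step r₂ t u₂) :
    ∃ v, Relation.ReflGen StepW u₁ v ∧ Relation.ReflGen StepW u₂ v := by
  induction h₁ generalizing r₂ u₂ with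
  | root h => exact rootDiamond h h₂
  | @appL a a' u h ih =>
    cases h₂ with
    | root h' =>
      obtain ⟨v, x, y⟩ := rootDiamond h' (Step.appL u h)
      exact ⟨v, y, x⟩
    | @appL _ a₂ _ h' =>
      obtain ⟨v, x, y⟩ := ih h'
      exact ⟨app v u, ReflGen_lift (stepW_appL u) x, ReflGen_lift (stepW_appL u) y⟩
    | @appR _ u₂' _ h' =>
      exact ⟨app a' u₂', .single (stepW_appR a' ⟨r₂, h'⟩), .single (stepW_appL u₂' ⟨_, h⟩)⟩
  | @appR b b' a h ih =>
    cases h₂ with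
    | root h' =>
      obtain ⟨v, x, y⟩ := rootDiamond h' (Step.appR a h)
      exact ⟨v, y, x⟩
    | @appL _ a₂ _ h' =>
      exact ⟨app a₂ b', .single (stepW_appL b' ⟨r₂, h'⟩), .single (stepW_appR a₂ ⟨_, h⟩)⟩
    | @appR _ b₂ _ h' =>
      obtain ⟨v, x, y⟩ := ih h'
      exact ⟨app a v, ReflGen_lift (stepW_appR a) x, ReflGen_lift (stepW_appR a) y⟩
  | @lam a a' h ih =>
    cases h₂ with
    | root h' => cases h'
    | lam h' =>
      obtain ⟨v, x, y⟩ := ih h'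
      exact ⟨lam v, ReflGen_lift stepW_lam x, ReflGen_lift stepW_lam y⟩
  | @der a a' h ih =>
    cases h₂ with
    | root h' =>
      obtain ⟨v, x, y⟩ := rootDiamond h' (Step.der h)
      exact ⟨v, y, x⟩
    | der h' =>
      obtain ⟨v, x, y⟩ := ih h'
      exact ⟨der v, ReflGen_lift stepW_der x, ReflGen_lift stepW_der y⟩
  | @esubL a a' u h ih =>
    cases h₂ with
    | root h' =>
      obtain ⟨v, x, y⟩ := rootDiamond h' (Step.esubL u h)
      exact ⟨v, y, x⟩
    | @esubL _ a₂ _ h' =>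
      obtain ⟨v, x, y⟩ := ih h'
      exact ⟨esub v u, ReflGen_lift (stepW_esubL u) x, ReflGen_lift (stepW_esubL u) y⟩
    | @esubR _ u₂' _ h' =>
      exact ⟨esub a' u₂', .single (stepW_esubR a' ⟨r₂, h'⟩), .single (stepW_esubL u₂' ⟨_, h⟩)⟩
  | @esubR b b' a h ih =>
    cases h₂ with
    | root h' =>
      obtain ⟨v, x, y⟩ := rootDiamond h' (Step.esubR a h)
      exact ⟨v, y, x⟩
    | @esubL _ a₂ _ h' =>
      exact ⟨esub a₂ b', .single (stepW_esubL b' ⟨r₂, h'⟩), .single (stepW_esubR a₂ ⟨_, h⟩)⟩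
    | @esubR _ b₂ _ h' =>
      obtain ⟨v, x, y⟩ := ih h'
      exact ⟨esub a v, ReflGen_lift (stepW_esubR a) x, ReflGen_lift (stepW_esubR a) y⟩


/-- **Confluence of the weak reduction** (Theorem 1, first item). -/
theorem confluence {t u₁ u₂ : Tm}
    (h₁ : Relation.ReflTransGen StepW t u₁)
    (h₂ : Relation.ReflTransGen StepW t u₂) :
    ∃ t' : Tm, Relation.ReflTransGen StepW u₁ t' ∧
      Relation.ReflTransGen StepW u₂ t' := by
  have D : ∀ a b c : Tm, StepW a b → StepW a c →
      ∃ d, Relation.ReflGen StepW b d ∧ Relation.ReflTransGen StepW c d := by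
    rintro a b c ⟨r₁, s₁⟩ ⟨r₂, s₂⟩
    obtain ⟨v, x, y⟩ := diamond s₁ s₂
    exact ⟨v, x, y.to_reflTransGen⟩
  exact Relation.church_rosser D h₁ h₂

end Confl
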